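/- arXiv:1610.08076 — 4 statements merged into one kernel-verified Lean document; each statement's English description precedes it below -/
import Mathlib

section
/- Let N be a positive integer, M ≥ 2 an integer, and let G be an N×M complex matrix such that GᴴG is invertible. Fix i ∈ {1,…,M}, let gᵢ be the i-th column of G and let Ḡᵢ be the N×(M−1) matrix obtained from G by deleting its i-th column; assume Ḡᵢᴴ Ḡᵢ is also invertible. Then [(GᴴG)⁻¹]_{i,i} · ( gᵢᴴ ( I_N − Ḡᵢ (Ḡᵢᴴ Ḡᵢ)⁻¹ Ḡᵢᴴ ) gᵢ ) = 1; equivalently, the reciprocal of the i-th diagonal entry of (GᴴG)⁻¹ equals the quadratic form of gᵢ under the orthogonal projection onto the null space of Ḡᵢᴴ. -/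
open Matrix

/-- For an `N × (M+1)` complex matrix `G` (with `M + 1 ≥ 2` columns) such that
`Gᴴ * G` is invertible, `gᵢ` the `i`-th column of `G` and `Ḡᵢ` the matrix obtained
by deleting the `i`-th column of `G` (with `Ḡᵢᴴ * Ḡᵢ` also invertible), the
reciprocal of the `i`-th diagonal entry of `(Gᴴ * G)⁻¹` equals the quadratic form
`gᵢᴴ (I - Ḡᵢ (Ḡᵢᴴ Ḡᵢ)⁻¹ Ḡᵢᴴ) gᵢ`. -/
theorem diag_inv_mul_projection_quadratic_form_eq_one
    {N M : ℕ} (hN : 0 < N) (hM : 1 ≤ M)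
    (G : Matrix (Fin N) (Fin (M + 1)) ℂ) (hG : IsUnit (Gᴴ * G)) (i : Fin (M + 1))
    (hGbar : IsUnit ((G.submatrix id i.succAbove)ᴴ * G.submatrix id i.succAbove)) :
    (Gᴴ * G)⁻¹ i i *
      (star (fun n => G n i) ⬝ᵥ
        (((1 : Matrix (Fin N) (Fin N) ℂ)
            - G.submatrix id i.succAbove
              * ((G.submatrix id i.succAbove)ᴴ * G.submatrix id i.succAbove)⁻¹
              * (G.submatrix id i.succAbove)ᴴ) *ᵥ (fun n => G n i))) = 1 := by
  set Gb := G.submatrix id i.succAbove with hGbdef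
  set g : Fin N → ℂ := fun n => G n i with hgdef
  have hdet : IsUnit (Gᴴ * G).det := (Matrix.isUnit_iff_isUnit_det _).mp hG
  have h1 : (Gᴴ * G) * (Gᴴ * G)⁻¹ = 1 := Matrix.mul_nonsing_inv _ hdet
  set B := (Gᴴ * G)⁻¹ with hBdef
  set v : Fin (M + 1) → ℂ := fun j => B j i with hvdef
  set vb : Fin M → ℂ := fun k => v (i.succAbove k) with hvbdef
  set u : Fin N → ℂ := G *ᵥ v with hudef
  -- Gᴴ u = e_i
  have hAu : ∀ j, (Gᴴ *ᵥ u) j = (1 : Matrix (Fin (M + 1)) (Fin (M + 1)) ℂ) j i := by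
    intro j
    have : Gᴴ *ᵥ u = (Gᴴ * G) *ᵥ v := by rw [hudef, Matrix.mulVec_mulVec]
    rw [this]
    have : ((Gᴴ * G) *ᵥ v) j = ((Gᴴ * G) * B) j i := by
      simp [Matrix.mulVec, Matrix.mul_apply, dotProduct, hvdef]
    rw [this, h1]
  -- decomposition of u
  have hu_dec : u = v i • g + Gb *ᵥ vb := by
    funext n
    simp only [hudef, Matrix.mulVec, dotProduct, Pi.add_apply, Pi.smul_apply,
      smul_eq_mul, Matrix.submatrix_apply, id_eq, hGbdef, hgdef, hvbdef]
    rw [Fin.sum_univ_succAbove (fun j => G n j * v j) i, mul_comm (G n i)]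
  -- Gbᴴ u = 0
  have hGbu : Gbᴴ *ᵥ u = 0 := by
    funext k
    have h := hAu (i.succAbove k)
    have hne : i.succAbove k ≠ i := Fin.succAbove_ne i k
    rw [Matrix.one_apply_ne hne] at h
    have : (Gbᴴ *ᵥ u) k = (Gᴴ *ᵥ u) (i.succAbove k) := by
      simp [hGbdef, Matrix.mulVec, dotProduct, Matrix.conjTranspose_apply]
    rw [this, h]
    rfl
  have hdet2 : IsUnit (Gbᴴ * Gb).det := (Matrix.isUnit_iff_isUnit_det _).mp hGbar
  have h2 : (Gbᴴ * Gb)⁻¹ * (Gbᴴ * Gb) = 1 := Matrix.nonsing_inv_mul _ hdet2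
  -- solve for vb
  have hsolve : (Gbᴴ * Gb) *ᵥ vb = -(v i) • (Gbᴴ *ᵥ g) := by
    have : Gbᴴ *ᵥ (v i • g + Gb *ᵥ vb) = 0 := by rw [← hu_dec]; exact hGbu
    rw [Matrix.mulVec_add, Matrix.mulVec_smul, Matrix.mulVec_mulVec] at this
    have := eq_neg_of_add_eq_zero_right this
    rw [this, neg_smul]
  set w : Fin M → ℂ := (Gbᴴ * Gb)⁻¹ *ᵥ (Gbᴴ *ᵥ g) with hwdef
  have hvb : vb = -(v i) • w := by
    have : (Gbᴴ * Gb)⁻¹ *ᵥ ((Gbᴴ * Gb) *ᵥ vb) = vb := by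
      rw [Matrix.mulVec_mulVec, h2, Matrix.one_mulVec]
    rw [← this, hsolve, Matrix.mulVec_smul, hwdef, Matrix.mulVec_mulVec]
  -- rewrite the quadratic form
  have hproj : ((1 : Matrix (Fin N) (Fin N) ℂ) - Gb * (Gbᴴ * Gb)⁻¹ * Gbᴴ) *ᵥ g
      = g - Gb *ᵥ w := by
    rw [Matrix.sub_mulVec, Matrix.one_mulVec, hwdef]
    rw [← Matrix.mulVec_mulVec, ← Matrix.mulVec_mulVec]
  have hu_eq : u = v i • (g - Gb *ᵥ w) := by
    rw [hu_dec, hvb, Matrix.mulVec_smul, smul_sub, neg_smul, ← sub_eq_add_neg]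
  have hfinal : star g ⬝ᵥ u = 1 := by
    have h := hAu i
    rw [Matrix.one_apply_eq] at h
    rw [← h]
    simp [Matrix.mulVec, dotProduct, Matrix.conjTranspose_apply, hgdef]
  calc B i i * (star g ⬝ᵥ (((1 : Matrix (Fin N) (Fin N) ℂ)
        - Gb * (Gbᴴ * Gb)⁻¹ * Gbᴴ) *ᵥ g))
      = star g ⬝ᵥ (v i • (g - Gb *ᵥ w)) := by
        rw [hproj, dotProduct_smul]
        simp [hvdef, smul_eq_mul]
    _ = star g ⬝ᵥ u := by rw [← hu_eq]
    _ = 1 := hfinal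
end

section
/- Let L ≥ 1 and let Z₁,…,Z_L be independent real random variables on a probability space, where Z_k is exponentially distributed with mean m_k > 0 and the means m₁,…,m_L are pairwise distinct. Then the expectation of the sum satisfies E[Z₁ + ⋯ + Z_L] = Σ_{k=1}^{L} ( ∏_{j≠k} m_k/(m_k − m_j) ) · m_k. -/
open MeasureTheory ProbabilityTheory Finset
open scoped ProbabilityTheory

/-!
By linearity the left side is `∑ k, ∫ Z k`, and `∫ Z k = m k`: since
`x * gammaPDFReal a r x = (a / r) * gammaPDFReal (a + 1) r x`, the Gamma law of shape `a` and
rate `r` has mean `a / r`, and the exponential law of rate `(m k)⁻¹` is the Gamma law of shape 1.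

On the right, the `k`-th term is `w k * m k ^ L` with `w k = ∏ j ≠ k, (m k - m j)⁻¹` the
barycentric weight of the node `m k`. Such a weighted sum is the coefficient of `X ^ (L - 1)` in
the Lagrange interpolant of `X ^ L` at the nodes; that interpolant is `X ^ L - ∏ k, (X - m k)`,
whose coefficient of `X ^ (L - 1)` is `∑ k, m k`.
-/

namespace ProbabilityTheory

lemma gammaPDFReal_mul_self {a r : ℝ} (ha : 0 < a) (hr : 0 < r) (x : ℝ) :
    gammaPDFReal a r x * x = a / r * gammaPDFReal (a + 1) r x := by
  unfold gammaPDFReal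
  split_ifs with hx
  · have hpow : x ^ (a - 1) * x = x ^ (a + 1 - 1) := by
      rw [add_sub_cancel_right, ← Real.rpow_add_one' hx (by linarith), sub_add_cancel]
    rw [Real.Gamma_add_one ha.ne', Real.rpow_add_one hr.ne', ← hpow]
    field_simp
  · simp

lemma integral_gammaPDFReal_eq_one {a r : ℝ} (ha : 0 < a) (hr : 0 < r) :
    ∫ x, gammaPDFReal a r x = 1 := by
  rw [integral_eq_lintegral_of_nonneg_ae (.of_forall (gammaPDFReal_nonneg ha hr))
    (measurable_gammaPDFReal a r).aestronglyMeasurable]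
  simp [← gammaPDF.eq_def, lintegral_gammaPDF_eq_one ha hr]

lemma integrable_gammaPDFReal {a r : ℝ} (ha : 0 < a) (hr : 0 < r) :
    Integrable (gammaPDFReal a r) :=
  integrable_of_integral_eq_one (integral_gammaPDFReal_eq_one ha hr)

lemma measurable_gammaPDF (a r : ℝ) : Measurable (gammaPDF a r) :=
  (measurable_gammaPDFReal a r).ennreal_ofReal

lemma integrable_id_gammaMeasure {a r : ℝ} (ha : 0 < a) (hr : 0 < r) :
    Integrable id (gammaMeasure a r) := by
  rw [gammaMeasure, integrable_withDensity_iff_integrable_smul' (measurable_gammaPDF a r)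
    (.of_forall fun _ => ENNReal.ofReal_lt_top)]
  simp only [gammaPDF, ENNReal.toReal_ofReal (gammaPDFReal_nonneg ha hr _), id, smul_eq_mul,
    gammaPDFReal_mul_self ha hr]
  exact (integrable_gammaPDFReal (by linarith) hr).const_mul _

lemma integral_id_gammaMeasure {a r : ℝ} (ha : 0 < a) (hr : 0 < r) :
    ∫ x, x ∂gammaMeasure a r = a / r := by
  rw [gammaMeasure, integral_withDensity_eq_integral_toReal_smul (measurable_gammaPDF a r)
    (.of_forall fun _ => ENNReal.ofReal_lt_top)]
  simp only [gammaPDF, ENNReal.toReal_ofReal (gammaPDFReal_nonneg ha hr _), smul_eq_mul,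
    gammaPDFReal_mul_self ha hr]
  rw [integral_const_mul, integral_gammaPDFReal_eq_one (by linarith) hr, mul_one]

lemma integrable_id_expMeasure {r : ℝ} (hr : 0 < r) : Integrable id (expMeasure r) :=
  integrable_id_gammaMeasure one_pos hr

lemma integral_id_expMeasure {r : ℝ} (hr : 0 < r) : ∫ x, x ∂expMeasure r = r⁻¹ := by
  rw [expMeasure, integral_id_gammaMeasure one_pos hr, one_div]

end ProbabilityTheory

namespace Lagrange

open Polynomial

section CommRing

variable {R : Type*} [CommRing R] {ι : Type*} {s : Finset ι} {v : ι → R}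

lemma coeff_nodal_card_sub_one [Nontrivial R] (hs : s.Nonempty) :
    (nodal s v).coeff (#s - 1) = -∑ i ∈ s, v i := by
  have hnext := prod_X_sub_C_nextCoeff (s := s) (f := v)
  rw [← nodal_eq, nextCoeff, natDegree_nodal, if_neg hs.card_pos.ne'] at hnext
  exact hnext

end CommRing

variable {F : Type*} [Field F] {ι : Type*} [DecidableEq ι] {s : Finset ι} {v : ι → F}

lemma coeff_interpolate_card_sub_one (r : ι → F) :
    (interpolate s v r).coeff (#s - 1) = ∑ i ∈ s, nodalWeight s v i * r i := by
  rw [interpolate_apply, finsetSum_coeff]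
  refine sum_congr rfl fun i hi => ?_
  have hdeg : (nodal (s.erase i) v).natDegree = #s - 1 := by
    rw [natDegree_nodal, card_erase_of_mem hi]
  rw [coeff_C_mul, basis_eq_prod_sub_inv_mul_nodal_div hi, ← nodal_erase_eq_nodal_div hi,
    coeff_C_mul, ← hdeg, nodal_monic.coeff_natDegree, mul_one, nodalWeight, mul_comm]

lemma X_pow_card_sub_nodal_eq_interpolate (hvs : Set.InjOn v s) :
    X ^ #s - nodal s v = interpolate s v (fun i => v i ^ #s) := by
  refine eq_interpolate_of_eval_eq _ hvs ?_ fun i hi => by simp [eval_nodal_at_node hi]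
  refine degree_sub_lt_left ?_ (pow_ne_zero _ X_ne_zero) ?_ |>.trans_eq (degree_X_pow _)
  · rw [degree_X_pow, degree_nodal]
  · rw [leadingCoeff_X_pow, nodal_monic.leadingCoeff]

lemma sum_nodalWeight_mul_pow_card (hvs : Set.InjOn v s) :
    ∑ i ∈ s, nodalWeight s v i * v i ^ #s = ∑ i ∈ s, v i := by
  rcases s.eq_empty_or_nonempty with rfl | hs
  · simp
  rw [← coeff_interpolate_card_sub_one, ← X_pow_card_sub_nodal_eq_interpolate hvs, coeff_sub,
    coeff_X_pow, if_neg (by have := hs.card_pos; omega), coeff_nodal_card_sub_one hs, zero_sub,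
    neg_neg]

lemma sum_prod_div_sub_mul_self (hvs : Set.InjOn v s) :
    ∑ i ∈ s, (∏ j ∈ s.erase i, v i / (v i - v j)) * v i = ∑ i ∈ s, v i := by
  rw [← sum_nodalWeight_mul_pow_card hvs]
  refine sum_congr rfl fun i hi => ?_
  rw [prod_div_distrib, prod_const, div_eq_mul_inv, ← prod_inv_distrib, nodalWeight,
    mul_right_comm, ← pow_succ, card_erase_add_one hi, mul_comm]

end Lagrange

theorem expectation_sum_indep_exponentials_general
    {Ω : Type*} [MeasureSpace Ω]
    {L : ℕ} (m : Fin L → ℝ) (hm : ∀ k, 0 < m k)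
    (hdist : Function.Injective m)
    (Z : Fin L → Ω → ℝ) (hmeas : ∀ k, Measurable (Z k))
    (hlaw : ∀ k, Measure.map (Z k) ℙ = expMeasure (m k)⁻¹) :
    ∫ ω, (∑ k, Z k ω) ∂ℙ
      = ∑ k, (∏ j ∈ univ.erase k, m k / (m k - m j)) * m k := by
  have hint (k : Fin L) : Integrable (Z k) := by
    have := integrable_id_expMeasure (inv_pos.2 (hm k))
    rwa [← hlaw k, integrable_map_measure aestronglyMeasurable_id (hmeas k).aemeasurable] at this
  have hmean (k : Fin L) : ∫ ω, Z k ω = m k := by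
    rw [← integral_map (hmeas k).aemeasurable measurable_id'.aestronglyMeasurable, hlaw k,
      integral_id_expMeasure (inv_pos.2 (hm k)), inv_inv]
  rw [integral_finsetSum _ fun k _ => hint k, sum_congr rfl fun k _ => hmean k,
    Lagrange.sum_prod_div_sub_mul_self hdist.injOn]

/-- The expectation of the sum of `L` independent exponential random variables with
pairwise distinct means `m k` equals
`Σ_k (Π_{j ≠ k} m k / (m k − m j)) · m k`. -/
theorem expectation_sum_indep_exponentials
    {Ω : Type*} [MeasureSpace Ω] [IsProbabilityMeasure (ℙ : Measure Ω)]
    {L : ℕ} (hL : 1 ≤ L) (m : Fin L → ℝ) (hm : ∀ k, 0 < m k)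
    (hdist : Function.Injective m)
    (Z : Fin L → Ω → ℝ) (hmeas : ∀ k, Measurable (Z k))
    (hindep : iIndepFun Z ℙ)
    (hlaw : ∀ k, Measure.map (Z k) ℙ = expMeasure (m k)⁻¹) :
    ∫ ω, (∑ k, Z k ω) ∂ℙ
      = ∑ k, (∏ j ∈ univ.erase k, m k / (m k - m j)) * m k :=
  expectation_sum_indep_exponentials_general m hm hdist Z hmeas hlaw
end

section
/- Let m > 0, a > 0, b > 0, p > 0, N₀ > 0 and γ > 0. Let L ≥ 1 and let m₁,…,m_L be pairwise distinct positive reals with weights w_j = ∏_{i≠j} m_j/(m_j − m_i). Let X and Z be independent real random variables on a probability space, where X is exponentially distributed with mean m, and Z has the hypoexponential density f_Z(z) = Σ_{j=1}^{L} w_j·(1/m_j)·exp(−z/m_j) on [0,∞). Set u = γ·p/(a·m) and v = (γ·N₀ + b)/(a·m). Then Pr[ (aX − b)⁺ < γ·(p·Z + N₀) ] = 1 − exp(−v) · Σ_{j=1}^{L} w_j / (1 + u·m_j). (This is the outage probability in the case of an equal number of transmit and receive antennas, M = N, i.e. shape k = 1.) -/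
/-!
Conditionally on `Z = z ≥ 0`, the outage event is `X < (b + γ(pz + N₀))/a`, whose probability is
the exponential CDF `1 - exp (-(uz + v))`; hence the outage probability is
`1 - e^{-v} E[e^{-uZ}]`, and the Laplace transform of the hypoexponential density is computed
termwise as `∑ j, w j / (1 + u m_j)`.

The density is not visibly nonnegative, whereas the law of `Z` only sees its positive part.
Lagrange interpolation at the nodes `1 / m_j` shows that the weights sum to `1`, so the density
and its positive part both integrate to `1`, which forces the density to be nonnegative a.e.
-/

open MeasureTheory ProbabilityTheory Finset Real
open scoped ProbabilityTheory

open Polynomial in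
theorem sum_prod_div_sub_eq_one {F ι : Type*} [Field F] [DecidableEq ι] {s : Finset ι}
    (hs : s.Nonempty) {x : ι → F} (hx : Set.InjOn x s) (hx0 : ∀ i ∈ s, x i ≠ 0) :
    ∑ j ∈ s, ∏ i ∈ s.erase j, x j / (x j - x i) = 1 := by
  have hinv : Set.InjOn (fun i => (x i)⁻¹) s := fun i hi j hj h => hx hi hj (inv_inj.mp h)
  -- the Lagrange basis at the nodes `(x i)⁻¹` is a partition of unity; evaluate it at `0`
  have h := congrArg (eval 0) (Lagrange.sum_basis hinv hs)
  rw [eval_finsetSum, eval_one] at h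
  rw [← h]
  refine sum_congr rfl fun j hj => ?_
  rw [Lagrange.basis, eval_prod]
  refine prod_congr rfl fun i hi => ?_
  obtain ⟨hij, hi⟩ := mem_erase.mp hi
  have hne : x i ≠ x j := fun h => hij (hx hi hj h)
  have := sub_ne_zero.mpr hne
  have := sub_ne_zero.mpr hne.symm
  have hi0 := hx0 i hi
  have hj0 := hx0 j hj
  simp only [Lagrange.basisDivisor, eval_mul, eval_C, eval_sub, eval_X, inv_sub_inv hj0 hi0,
    inv_div]
  field_simp
  ring

theorem integrableOn_exp_neg_mul_Ioi_zero {r : ℝ} (hr : 0 < r) :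
    IntegrableOn (fun x => exp (-(r * x))) (Set.Ioi 0) := by
  simpa only [neg_mul] using exp_neg_integrableOn_Ioi 0 hr

theorem integral_exp_neg_mul_Ioi_zero {r : ℝ} (hr : 0 < r) :
    ∫ x in Set.Ioi 0, exp (-(r * x)) = r⁻¹ := by
  simpa [neg_mul, div_neg, neg_div, one_div] using integral_exp_mul_Ioi (neg_lt_zero.mpr hr) 0

section

variable {α : Type*} [MeasurableSpace α] {μ : Measure α} {f : α → ℝ}

theorem ae_nonneg_of_integral_eq_toReal_lintegral_ofReal (hf : Integrable f μ)
    (h : ∫ x, f x ∂μ = (∫⁻ x, ENNReal.ofReal (f x) ∂μ).toReal) : 0 ≤ᵐ[μ] f := by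
  rw [integral_eq_lintegral_pos_part_sub_lintegral_neg_part hf, sub_eq_self,
    ENNReal.toReal_eq_zero_iff] at h
  have hneg : ∫⁻ x, ENNReal.ofReal (-f x) ∂μ = 0 := h.resolve_right hf.neg.lintegral_lt_top.ne
  have hm : AEMeasurable (fun x => ENNReal.ofReal (-f x)) μ := hf.aemeasurable.neg.ennreal_ofReal
  filter_upwards [(lintegral_eq_zero_iff' hm).mp hneg] with x hx
  simpa using hx

theorem integral_withDensity_ofReal (hfm : AEMeasurable f μ) (hf : 0 ≤ᵐ[μ] f) (g : α → ℝ) :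
    ∫ x, g x ∂μ.withDensity (fun x => ENNReal.ofReal (f x)) = ∫ x, f x * g x ∂μ := by
  rw [integral_withDensity_eq_integral_toReal_smul₀ hfm.ennreal_ofReal
    (ae_of_all _ fun _ => ENNReal.ofReal_lt_top)]
  refine integral_congr_ae ?_
  filter_upwards [hf] with x hx
  rw [ENNReal.toReal_ofReal hx, smul_eq_mul]

end

theorem expMeasure_Iio {r : ℝ} (hr : 0 < r) (t : ℝ) :
    expMeasure r (Set.Iio t) = ENNReal.ofReal (1 - exp (-(r * t))) := by
  have h := lintegral_exponentialPDF_eq_antiDeriv hr t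
  rw [← setLIntegral_congr Iio_ae_eq_Iic] at h
  rw [expMeasure, gammaMeasure, withDensity_apply _ measurableSet_Iio]
  refine h.trans ?_
  split_ifs with ht
  · rfl
  · rw [ENNReal.ofReal_zero, eq_comm, ENNReal.ofReal_eq_zero, sub_nonpos, one_le_exp_iff]
    nlinarith

theorem measure_lt_of_indepFun_expMeasure {Ω : Type*} [MeasurableSpace Ω] {μ : Measure Ω}
    [IsProbabilityMeasure μ] {r : ℝ} (hr : 0 < r) {X Y : Ω → ℝ} (hX : Measurable X)
    (hY : Measurable Y) (hXlaw : μ.map X = expMeasure r) (hXY : IndepFun X Y μ)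
    (hY0 : 0 ≤ᵐ[μ] Y) :
    (μ {ω | X ω < Y ω}).toReal = 1 - ∫ ω, exp (-(r * Y ω)) ∂μ := by
  have := isProbabilityMeasure_expMeasure hr
  have hS : MeasurableSet {q : ℝ × ℝ | q.1 < q.2} := measurableSet_lt measurable_fst measurable_snd
  have hlaw : μ.map (fun ω => (X ω, Y ω)) = (expMeasure r).prod (μ.map Y) := by
    rw [← hXlaw, ← indepFun_iff_map_prod_eq_prod_map_map hX.aemeasurable hY.aemeasurable]
    exact hXY
  have hcond : μ {ω | X ω < Y ω} = ∫⁻ ω, ENNReal.ofReal (1 - exp (-(r * Y ω))) ∂μ := by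
    calc μ {ω | X ω < Y ω} = μ.map (fun ω => (X ω, Y ω)) {q | q.1 < q.2} := by
          rw [Measure.map_apply (hX.prodMk hY) hS]; rfl
      _ = ∫⁻ y, expMeasure r (Set.Iio y) ∂μ.map Y := by
          rw [hlaw, Measure.prod_apply_symm hS]; rfl
      _ = ∫⁻ ω, ENNReal.ofReal (1 - exp (-(r * Y ω))) ∂μ := by
          simp_rw [expMeasure_Iio hr]
          exact lintegral_map (by fun_prop) hY
  have hexp_le : ∀ᵐ ω ∂μ, exp (-(r * Y ω)) ≤ 1 := by
    filter_upwards [hY0] with ω hω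
    exact exp_le_one_iff.mpr (neg_nonpos.mpr (mul_nonneg hr.le hω))
  have hint : Integrable (fun ω => exp (-(r * Y ω))) μ := by
    refine Integrable.of_bound (by fun_prop) 1 ?_
    filter_upwards [hexp_le] with ω hω
    rwa [norm_of_nonneg (exp_nonneg _)]
  rw [hcond, ← integral_eq_lintegral_of_nonneg_ae (hexp_le.mono fun ω => sub_nonneg.mpr)
    (by fun_prop), integral_sub (integrable_const 1) hint, integral_const, probReal_univ,
    one_smul]

section Hypoexponential

variable {ι : Type*} [Fintype ι]

noncomputable def hypoexpDensity (m w : ι → ℝ) (z : ℝ) : ℝ :=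
  if 0 ≤ z then ∑ j, w j * (1 / m j) * exp (-z / m j) else 0

noncomputable def hypoexpMeasure (m w : ι → ℝ) : Measure ℝ :=
  volume.withDensity fun z => ENNReal.ofReal (hypoexpDensity m w z)

variable {m w : ι → ℝ} {s : ℝ}

@[fun_prop]
theorem measurable_hypoexpDensity : Measurable (hypoexpDensity m w) :=
  Measurable.ite measurableSet_Ici (by fun_prop) measurable_const

theorem hypoexpDensity_mul_exp_neg_mul (hm : ∀ j, m j ≠ 0) (z : ℝ) :
    hypoexpDensity m w z * exp (-(s * z)) = (Set.Ici 0).indicator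
      (fun z => ∑ j, w j / m j * exp (-((1 + s * m j) / m j * z))) z := by
  by_cases hz : 0 ≤ z
  · simp only [hypoexpDensity, if_pos hz, Set.indicator_of_mem (Set.mem_Ici.mpr hz), sum_mul]
    refine sum_congr rfl fun j _ => ?_
    have := hm j
    rw [mul_assoc, ← exp_add]
    congr 2 <;> field_simp
    ring
  · simp [hypoexpDensity, hz]

theorem integrable_hypoexpDensity_mul_exp_neg_mul (hm : ∀ j, 0 < m j)
    (hs : ∀ j, 0 < 1 + s * m j) :
    Integrable fun z => hypoexpDensity m w z * exp (-(s * z)) := by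
  simp_rw [hypoexpDensity_mul_exp_neg_mul fun j => (hm j).ne']
  rw [integrable_indicator_iff measurableSet_Ici, integrableOn_Ici_iff_integrableOn_Ioi]
  exact integrable_finsetSum _ fun j _ =>
    (integrableOn_exp_neg_mul_Ioi_zero (div_pos (hs j) (hm j))).const_mul _

theorem integral_hypoexpDensity_mul_exp_neg_mul (hm : ∀ j, 0 < m j)
    (hs : ∀ j, 0 < 1 + s * m j) :
    ∫ z, hypoexpDensity m w z * exp (-(s * z)) = ∑ j, w j / (1 + s * m j) := by
  have hrate : ∀ j, 0 < (1 + s * m j) / m j := fun j => div_pos (hs j) (hm j)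
  simp_rw [hypoexpDensity_mul_exp_neg_mul fun j => (hm j).ne',
    integral_indicator measurableSet_Ici, integral_Ici_eq_integral_Ioi]
  rw [integral_finsetSum _ fun j _ => (integrableOn_exp_neg_mul_Ioi_zero (hrate j)).const_mul _]
  refine sum_congr rfl fun j _ => ?_
  rw [integral_const_mul, integral_exp_neg_mul_Ioi_zero (hrate j), inv_div,
    div_mul_div_cancel₀ (hm j).ne']

theorem hypoexpDensity_ae_nonneg [IsProbabilityMeasure (hypoexpMeasure m w)]
    (hm : ∀ j, 0 < m j) (hw : ∑ j, w j = 1) : 0 ≤ᵐ[volume] hypoexpDensity m w := by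
  have hs : ∀ j, 0 < 1 + 0 * m j := fun j => by simp
  have hint := integrable_hypoexpDensity_mul_exp_neg_mul (w := w) hm hs
  have hval := integral_hypoexpDensity_mul_exp_neg_mul (w := w) hm hs
  simp only [zero_mul, neg_zero, exp_zero, mul_one, add_zero, div_one] at hint hval
  refine ae_nonneg_of_integral_eq_toReal_lintegral_ofReal hint ?_
  rw [hval, hw, ← setLIntegral_univ, ← withDensity_apply _ MeasurableSet.univ, ← hypoexpMeasure,
    measure_univ, ENNReal.toReal_one]

theorem ae_nonneg_hypoexpMeasure : ∀ᵐ z ∂hypoexpMeasure m w, 0 ≤ z := by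
  simp only [ae_iff, not_le]
  rw [show {a : ℝ | a < 0} = Set.Iio 0 from rfl, hypoexpMeasure,
    withDensity_apply _ measurableSet_Iio,
    setLIntegral_congr_fun measurableSet_Iio (g := fun _ => 0)
      fun z (hz : z < 0) => by simp [hypoexpDensity, not_le.mpr hz], lintegral_zero]

theorem integral_exp_neg_mul_hypoexpMeasure [IsProbabilityMeasure (hypoexpMeasure m w)]
    (hm : ∀ j, 0 < m j) (hw : ∑ j, w j = 1) (hs : ∀ j, 0 < 1 + s * m j) :
    ∫ z, exp (-(s * z)) ∂hypoexpMeasure m w = ∑ j, w j / (1 + s * m j) := by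
  rw [hypoexpMeasure, integral_withDensity_ofReal measurable_hypoexpDensity.aemeasurable
    (hypoexpDensity_ae_nonneg hm hw), integral_hypoexpDensity_mul_exp_neg_mul hm hs]

end Hypoexponential

/-- Outage probability with an equal number of transmit and receive antennas
(`M = N`, i.e. shape `k = 1`): `X` is exponential with mean `m`, `Z` is
hypoexponential with pairwise distinct positive parameters `mz j` and weights
`w j = Π_{i ≠ j} mz j / (mz j − mz i)`, `X` and `Z` are independent,
`u = γp/(am)` and `v = (γN₀ + b)/(am)`; then
`Pr[(aX − b)⁺ < γ(pZ + N₀)] = 1 − e^{−v} Σ_j w j / (1 + u·mz j)`. -/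
theorem outage_probability_exponential_hypoexponential
    {Ω : Type*} [MeasureSpace Ω] [IsProbabilityMeasure (ℙ : Measure Ω)]
    {m a b p N₀ γ : ℝ}
    (hm : 0 < m) (ha : 0 < a) (hb : 0 < b) (hp : 0 < p) (hN₀ : 0 < N₀) (hγ : 0 < γ)
    {L : ℕ} (hL : 1 ≤ L) (mz : Fin L → ℝ) (hmz : ∀ j, 0 < mz j)
    (hdist : Function.Injective mz)
    (w : Fin L → ℝ) (hw : ∀ j, w j = ∏ i ∈ univ.erase j, mz j / (mz j - mz i))
    (X Z : Ω → ℝ) (hX : Measurable X) (hZ : Measurable Z)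
    (hXlaw : Measure.map X ℙ = expMeasure m⁻¹)
    (hZlaw : Measure.map Z ℙ = volume.withDensity (fun z => ENNReal.ofReal
        (if 0 ≤ z then ∑ j, w j * (1 / mz j) * Real.exp (-z / mz j) else 0)))
    (hindep : IndepFun X Z ℙ)
    (u v : ℝ) (hu : u = γ * p / (a * m)) (hv : v = (γ * N₀ + b) / (a * m)) :
    (ℙ {ω | max (a * X ω - b) 0 < γ * (p * Z ω + N₀)}).toReal
      = 1 - Real.exp (-v) * ∑ j, w j / (1 + u * mz j) := by
  replace hZlaw : Measure.map Z ℙ = hypoexpMeasure mz w := hZlaw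
  have hsum : ∑ j, w j = 1 := by
    simp_rw [hw]
    exact sum_prod_div_sub_eq_one ⟨⟨0, hL⟩, mem_univ _⟩ hdist.injOn fun j _ => (hmz j).ne'
  have : IsProbabilityMeasure (hypoexpMeasure mz w) :=
    hZlaw ▸ Measure.isProbabilityMeasure_map hZ.aemeasurable
  have hZ0 : ∀ᵐ ω ∂ℙ, 0 ≤ Z ω := ae_of_ae_map hZ.aemeasurable (hZlaw ▸ ae_nonneg_hypoexpMeasure)
  set Y : Ω → ℝ := fun ω => (b + γ * (p * Z ω + N₀)) / a
  have hXY : IndepFun X Y ℙ :=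
    hindep.comp (ψ := fun z => (b + γ * (p * z + N₀)) / a) measurable_id (by fun_prop)
  have hevent : {ω | max (a * X ω - b) 0 < γ * (p * Z ω + N₀)} =ᵐ[ℙ] {ω | X ω < Y ω} := by
    refine Filter.eventuallyEq_set.mpr ?_
    filter_upwards [hZ0] with ω hω
    have hpos : 0 < γ * (p * Z ω + N₀) := by positivity
    show _ < _ ↔ _ < _
    rw [max_lt_iff, lt_div_iff₀ ha]
    constructor
    · intro h; linarith [h.1]
    · intro h; exact ⟨by linarith, hpos⟩
  have hexp : ∀ ω, exp (-(m⁻¹ * Y ω)) = exp (-v) * exp (-(u * Z ω)) := fun ω => by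
    rw [← exp_add, hu, hv]
    congr 1
    dsimp only [Y]
    field_simp
    ring
  have hu0 : ∀ j, 0 < 1 + u * mz j := fun j => by rw [hu]; have := hmz j; positivity
  rw [measure_congr hevent, measure_lt_of_indepFun_expMeasure (inv_pos.mpr hm) hX (by fun_prop)
      hXlaw hXY (hZ0.mono fun ω hω => by positivity),
    integral_congr_ae (ae_of_all _ hexp), integral_const_mul,
    ← integral_map (f := fun z => exp (-(u * z))) hZ.aemeasurable (by fun_prop), hZlaw,
    integral_exp_neg_mul_hypoexpMeasure hmz hsum hu0]
end

section
/- Let k ≥ 1 and L ≥ 1 be integers, m > 0, μ > 0, a > 0, b > 0, p > 0, N₀ > 0 and γ > 0. Let X and Z be independent real random variables on a probability space, where X has the Gamma (Erlang) distribution with integer shape k and scale m, and Z has the Gamma (Erlang) distribution with integer shape L and scale μ (i.e. Z is distributed as the sum of L i.i.d. exponentials with mean μ, modelling co-located primary transmit antennas). Set u = γ·p/(a·m) and v = (γ·N₀ + b)/(a·m). Then Pr[ (aX − b)⁺ < γ·(p·Z + N₀) ] = 1 − exp(−v) · Σ_{l=0}^{k−1} Σ_{s=0}^{l} binom(l, s)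 · (s+L−1)! · v^{l−s} · u^s / ( l! · (L−1)! · μ^L · (u + 1/μ)^{s+L} ). -/
open MeasureTheory ProbabilityTheory Finset
open scoped ProbabilityTheory

/-!
Conditionally on `Z = z ≥ 0`, the link is *not* in outage exactly when `X ≥ w(z)` with
`w(z) = (γ(pz + N₀) + b)/a`, and the Erlang survival function gives
`P(X ≥ w) = e^{-w/m} ∑_{l<k} (w/m)^l/l!`, where `w(z)/m = uz + v`. Averaging over `Z`
(independence and Fubini) and expanding `(uz + v)^l` binomially leaves the Erlang moments
`E[Z^s e^{-uZ}] = (s+L-1)! / ((L-1)! μ^L (u + 1/μ)^{s+L})`, which are Gamma integrals.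
-/

open Real Filter Topology

lemma integral_pow_mul_exp_neg_mul_Ioi {c : ℝ} (hc : 0 < c) (n : ℕ) :
    ∫ t in Set.Ioi (0 : ℝ), t ^ n * exp (-(c * t)) = n.factorial / c ^ (n + 1) := by
  have h := integral_rpow_mul_exp_neg_mul_Ioi (a := n + 1) (by positivity) hc
  rw [add_sub_cancel_right, Gamma_nat_eq_factorial, ← Nat.cast_succ, rpow_natCast] at h
  simp_rw [← rpow_natCast, h, rpow_natCast, Nat.succ_eq_add_one, div_pow, one_pow]
  field_simp

lemma integrableOn_pow_mul_exp_neg_mul_Ioi {c : ℝ} (hc : 0 < c) (n : ℕ) :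
    IntegrableOn (fun t => t ^ n * exp (-(c * t))) (Set.Ioi 0) :=
  Integrable.of_integral_ne_zero <| by
    rw [integral_pow_mul_exp_neg_mul_Ioi hc]; positivity

lemma gammaPDFReal_natCast {k : ℕ} (hk : 0 < k) (r : ℝ) :
    gammaPDFReal k r =
      (Set.Ici 0).indicator
        fun t => r ^ k / (k - 1).factorial * (t ^ (k - 1) * exp (-(r * t))) := by
  obtain ⟨n, rfl⟩ := Nat.exists_eq_succ_of_ne_zero hk.ne'
  ext t
  simp only [gammaPDFReal, Set.indicator, Set.mem_Ici]
  split_ifs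
  · push_cast
    rw [add_sub_cancel_right, Gamma_nat_eq_factorial, ← Nat.cast_succ, rpow_natCast,
      rpow_natCast]
    ring
  · rfl

lemma integral_gammaMeasure {a r : ℝ} (ha : 0 < a) (hr : 0 < r) (g : ℝ → ℝ) :
    ∫ x, g x ∂gammaMeasure a r = ∫ x, gammaPDFReal a r x * g x := by
  rw [gammaMeasure, integral_withDensity_eq_integral_toReal_smul (f := gammaPDF a r)
    (measurable_gammaPDFReal a r).ennreal_ofReal (ae_of_all _ fun _ => ENNReal.ofReal_lt_top)]
  simp_rw [gammaPDF, ENNReal.toReal_ofReal (gammaPDFReal_nonneg ha hr _), smul_eq_mul]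

lemma integrable_gammaMeasure_iff {a r : ℝ} (ha : 0 < a) (hr : 0 < r) {g : ℝ → ℝ} :
    Integrable g (gammaMeasure a r) ↔ Integrable fun x => gammaPDFReal a r x * g x := by
  rw [gammaMeasure, integrable_withDensity_iff_integrable_smul' (f := gammaPDF a r)
    (measurable_gammaPDFReal a r).ennreal_ofReal (ae_of_all _ fun _ => ENNReal.ofReal_lt_top)]
  simp_rw [gammaPDF, ENNReal.toReal_ofReal (gammaPDFReal_nonneg ha hr _), smul_eq_mul]

lemma ae_nonneg_gammaMeasure (a r : ℝ) : ∀ᵐ z ∂gammaMeasure a r, 0 ≤ z := by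
  simp only [ae_iff, not_le]
  exact (withDensity_apply _ measurableSet_Iio).trans (lintegral_gammaPDF_of_nonpos le_rfl)

noncomputable def erlangSurvival (k : ℕ) (x : ℝ) : ℝ :=
  exp (-x) * ∑ l ∈ range k, x ^ l / l.factorial

@[fun_prop]
lemma continuous_erlangSurvival (k : ℕ) : Continuous (erlangSurvival k) := by
  unfold erlangSurvival; fun_prop

lemma erlangSurvival_nonneg (k : ℕ) {x : ℝ} (hx : 0 ≤ x) : 0 ≤ erlangSurvival k x := by
  unfold erlangSurvival; positivity

lemma hasDerivAt_erlangSurvival (n : ℕ) (x : ℝ) :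
    HasDerivAt (erlangSurvival (n + 1)) (-(exp (-x) * x ^ n / n.factorial)) x := by
  induction n with
  | zero =>
    have h1 : erlangSurvival 1 = fun x => exp (-x) := by ext; simp [erlangSurvival]
    simpa [h1] using (hasDerivAt_neg x).exp
  | succ n ih =>
    have hterm : HasDerivAt (fun x => exp (-x) * (x ^ (n + 1) / (n + 1).factorial))
        (-exp (-x) * (x ^ (n + 1) / (n + 1).factorial)
          + exp (-x) * ((n + 1 : ℕ) * x ^ n / (n + 1).factorial)) x :=
      (hasDerivAt_neg x).exp.mul ((hasDerivAt_pow (n + 1) x).div_const _) |>.congr_deriv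
        (by push_cast; ring)
    have hsplit : erlangSurvival (n + 2) =
        fun x => erlangSurvival (n + 1) x + exp (-x) * (x ^ (n + 1) / (n + 1).factorial) := by
      ext x; simp only [erlangSurvival, sum_range_succ _ (n + 1)]; ring
    rw [hsplit]
    refine (ih.add hterm).congr_deriv ?_
    rw [Nat.factorial_succ]
    push_cast
    field_simp
    ring

lemma tendsto_erlangSurvival_atTop (k : ℕ) : Tendsto (erlangSurvival k) atTop (𝓝 0) := by
  have h : ∀ l ∈ range k,
      Tendsto (fun x : ℝ => x ^ l * exp (-x) / l.factorial) atTop (𝓝 0) :=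
    fun l _ => by simpa using (tendsto_pow_mul_exp_neg_atTop_nhds_zero l).div_const _
  rw [← sum_const_zero (s := range k)]
  refine (tendsto_finsetSum _ h).congr fun x => ?_
  simp only [erlangSurvival, mul_sum]
  exact sum_congr rfl fun l _ => by ring

lemma erlangSurvival_add_eq_sum (k : ℕ) (u v z : ℝ) :
    erlangSurvival k (u * z + v) = ∑ l ∈ range k, ∑ s ∈ range (l + 1),
      exp (-v) * l.choose s * v ^ (l - s) * u ^ s / l.factorial * (z ^ s * exp (-(u * z))) := by
  have hexp : exp (-(u * z + v)) = exp (-v) * exp (-(u * z)) := by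
    rw [← exp_add]; ring_nf
  simp only [erlangSurvival, hexp, mul_sum, add_pow, sum_div]
  refine sum_congr rfl fun l _ => sum_congr rfl fun s _ => ?_
  rw [mul_pow]
  ring

lemma gammaMeasure_real_Ici {k : ℕ} (hk : 0 < k) {r x : ℝ} (hr : 0 < r) (hx : 0 ≤ x) :
    (gammaMeasure k r).real (Set.Ici x) = erlangSurvival k (r * x) := by
  obtain ⟨n, rfl⟩ := Nat.exists_eq_succ_of_ne_zero hk.ne'
  have hderiv : ∀ t ∈ Set.Ici x, HasDerivAt (fun t => -erlangSurvival (n + 1) (r * t))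
      (r ^ (n + 1) / n.factorial * (t ^ n * exp (-(r * t)))) t := fun t _ =>
    ((hasDerivAt_erlangSurvival n (r * t)).comp t ((hasDerivAt_id t).const_mul r)).neg
      |>.congr_deriv (by simp only [mul_pow]; ring)
  have hint : IntegrableOn (fun t => r ^ (n + 1) / n.factorial * (t ^ n * exp (-(r * t))))
      (Set.Ioi x) :=
    IntegrableOn.mono_set ((integrableOn_pow_mul_exp_neg_mul_Ioi hr n).const_mul _)
      (Set.Ioi_subset_Ioi hx)
  have hdensity : ∀ t ∈ Set.Ioi x, gammaPDFReal (n + 1 : ℕ) r t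
      = r ^ (n + 1) / n.factorial * (t ^ n * exp (-(r * t))) := fun t ht => by
    rw [gammaPDFReal_natCast n.succ_pos, Set.indicator_of_mem (Set.mem_Ici.2 (hx.trans ht.out.le))]
    rfl
  calc (gammaMeasure (n + 1 : ℕ) r).real (Set.Ici x)
      = ∫ t in Set.Ioi x, gammaPDFReal (n + 1 : ℕ) r t := by
        rw [← integral_indicator_one measurableSet_Ici, integral_gammaMeasure (by positivity) hr,
          ← integral_Ici_eq_integral_Ioi, ← integral_indicator measurableSet_Ici]
        simp_rw [Set.indicator_apply, Pi.one_apply, mul_ite, mul_one, mul_zero]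
    _ = -0 - -erlangSurvival (n + 1) (r * x) := by
        rw [setIntegral_congr_fun measurableSet_Ioi hdensity]
        exact integral_Ioi_of_hasDerivAt_of_tendsto' hderiv hint
          ((tendsto_erlangSurvival_atTop _).comp (tendsto_id.const_mul_atTop hr)).neg
    _ = erlangSurvival (n + 1) (r * x) := by ring

lemma gammaPDFReal_natCast_mul_pow_mul_exp_neg_mul {L : ℕ} (hL : 0 < L) (r u : ℝ) (j : ℕ) :
    (fun z => gammaPDFReal L r z * (z ^ j * exp (-(u * z)))) = (Set.Ici 0).indicator
      fun z => r ^ L / (L - 1).factorial * (z ^ (j + L - 1) * exp (-((u + r) * z))) := by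
  ext z
  rw [gammaPDFReal_natCast hL, Set.indicator_apply, Set.indicator_apply]
  split_ifs
  · rw [show j + L - 1 = (L - 1) + j by omega, pow_add, add_mul, neg_add, exp_add]
    ring
  · rw [zero_mul]

lemma integrable_pow_mul_exp_neg_mul_gammaMeasure {L : ℕ} (hL : 0 < L) {r u : ℝ} (hr : 0 < r)
    (hur : 0 < u + r) (j : ℕ) :
    Integrable (fun z => z ^ j * exp (-(u * z))) (gammaMeasure L r) := by
  rw [integrable_gammaMeasure_iff (by positivity) hr,
    gammaPDFReal_natCast_mul_pow_mul_exp_neg_mul hL, integrable_indicator_iff measurableSet_Ici,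
    integrableOn_Ici_iff_integrableOn_Ioi]
  exact (integrableOn_pow_mul_exp_neg_mul_Ioi hur _).const_mul _

lemma integral_pow_mul_exp_neg_mul_gammaMeasure {L : ℕ} (hL : 0 < L) {r u : ℝ} (hr : 0 < r)
    (hur : 0 < u + r) (j : ℕ) :
    ∫ z, z ^ j * exp (-(u * z)) ∂gammaMeasure L r
      = r ^ L * (j + L - 1).factorial / ((L - 1).factorial * (u + r) ^ (j + L)) := by
  rw [integral_gammaMeasure (by positivity) hr, gammaPDFReal_natCast_mul_pow_mul_exp_neg_mul hL,
    integral_indicator measurableSet_Ici, integral_Ici_eq_integral_Ioi, integral_const_mul,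
    integral_pow_mul_exp_neg_mul_Ioi hur, show j + L - 1 + 1 = j + L by omega]
  ring

lemma integral_erlangSurvival_gammaMeasure (k : ℕ) {L : ℕ} (hL : 0 < L) {r u v : ℝ}
    (hr : 0 < r) (hur : 0 < u + r) :
    ∫ z, erlangSurvival k (u * z + v) ∂gammaMeasure L r
      = exp (-v) * ∑ l ∈ range k, ∑ s ∈ range (l + 1),
          l.choose s * (s + L - 1).factorial * v ^ (l - s) * u ^ s * r ^ L
            / (l.factorial * (L - 1).factorial * (u + r) ^ (s + L)) := by
  have hint := integrable_pow_mul_exp_neg_mul_gammaMeasure hL hr hur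
  simp_rw [erlangSurvival_add_eq_sum]
  rw [integral_finsetSum _ fun l _ => integrable_finsetSum _ fun s _ => (hint s).const_mul _]
  simp_rw [mul_sum]
  refine sum_congr rfl fun l _ => ?_
  rw [integral_finsetSum _ fun s _ => (hint s).const_mul _]
  refine sum_congr rfl fun s _ => ?_
  rw [integral_const_mul, integral_pow_mul_exp_neg_mul_gammaMeasure hL hr hur]
  field_simp

lemma ProbabilityTheory.IndepFun.measure_prodMk_mem_eq_lintegral {Ω α β : Type*}
    [MeasurableSpace Ω] [MeasurableSpace α] [MeasurableSpace β]
    {μ : Measure Ω} [IsFiniteMeasure μ]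
    {X : Ω → α} {Z : Ω → β} (hX : Measurable X) (hZ : Measurable Z) (h : IndepFun X Z μ)
    {S : Set (α × β)} (hS : MeasurableSet S) :
    μ {ω | (X ω, Z ω) ∈ S} = ∫⁻ z, μ.map X {x | (x, z) ∈ S} ∂μ.map Z := by
  rw [show {ω | (X ω, Z ω) ∈ S} = (fun ω => (X ω, Z ω)) ⁻¹' S from rfl,
    ← Measure.map_apply (hX.prodMk hZ) hS,
    (indepFun_iff_map_prod_eq_prod_map_map hX.aemeasurable hZ.aemeasurable).1 h,
    Measure.prod_apply_symm hS]
  rfl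

lemma setOf_not_max_sub_lt {a b c : ℝ} (ha : 0 < a) (hc : 0 < c) :
    {x : ℝ | ¬ max (a * x - b) 0 < c} = Set.Ici ((c + b) / a) := by
  ext x
  simp only [Set.mem_ofPred_eq, max_lt_iff, hc, and_true, not_lt, Set.mem_Ici, div_le_iff₀ ha]
  constructor <;> intro h <;> linarith

lemma ProbabilityTheory.IndepFun.measureReal_max_sub_lt {Ω : Type*} [MeasurableSpace Ω]
    {μ : Measure Ω} [IsProbabilityMeasure μ]
    {X Z : Ω → ℝ} (hX : Measurable X) (hZ : Measurable Z)
    (h : IndepFun X Z μ) {k : ℕ} (hk : 0 < k) {r : ℝ} (hr : 0 < r)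
    (hXlaw : μ.map X = gammaMeasure k r) {a b : ℝ} (ha : 0 < a) (hb : 0 ≤ b)
    {c : ℝ → ℝ} (hc : Measurable c) (hcpos : ∀ᵐ z ∂μ.map Z, 0 < c z) :
    μ.real {ω | max (a * X ω - b) 0 < c (Z ω)}
      = 1 - ∫ z, erlangSurvival k (r * ((c z + b) / a)) ∂μ.map Z := by
  set S := {q : ℝ × ℝ | max (a * q.1 - b) 0 < c q.2}
  have hS : MeasurableSet S := measurableSet_lt (by fun_prop) (by fun_prop)
  have hslice : ∀ᵐ z ∂μ.map Z, μ.map X {x | (x, z) ∈ Sᶜ}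
      = ENNReal.ofReal (erlangSurvival k (r * ((c z + b) / a))) := by
    filter_upwards [hcpos] with z hz
    rw [← gammaMeasure_real_Ici hk hr (by positivity), ← setOf_not_max_sub_lt ha hz, ← hXlaw,
      measureReal_def, ENNReal.ofReal_toReal (measure_ne_top _ _)]
    rfl
  have hnonneg : ∀ᵐ z ∂μ.map Z, 0 ≤ erlangSurvival k (r * ((c z + b) / a)) :=
    hcpos.mono fun z hz => erlangSurvival_nonneg k (by positivity)
  rw [← compl_compl {ω | _}, probReal_compl_eq_one_sub
      (measurableSet_lt (by fun_prop) (by fun_prop) : MeasurableSet {ω | _}).compl,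
    measureReal_def,
    show {ω | max (a * X ω - b) 0 < c (Z ω)}ᶜ = {ω | (X ω, Z ω) ∈ Sᶜ} from rfl,
    h.measure_prodMk_mem_eq_lintegral hX hZ hS.compl, lintegral_congr_ae hslice,
    ← integral_eq_lintegral_of_nonneg_ae hnonneg (by fun_prop)]

/-- Outage probability with co-located primary transmit antennas: `X` is Erlang with
integer shape `k` and scale `m`, `Z` is Erlang with integer shape `L` and scale `μ`,
`X` and `Z` are independent, `u = γp/(am)` and `v = (γN₀ + b)/(am)`; then
`Pr[(aX − b)⁺ < γ(pZ + N₀)]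
  = 1 − e^{−v} Σ_{l=0}^{k−1} Σ_{s=0}^{l} C(l,s)·(s+L−1)!·v^{l−s}·u^s
      / (l!·(L−1)!·μ^L·(u + 1/μ)^{s+L})`. -/
theorem outage_probability_erlang_erlang
    {Ω : Type*} [MeasureSpace Ω] [IsProbabilityMeasure (ℙ : Measure Ω)]
    {k L : ℕ} (hk : 1 ≤ k) (hL : 1 ≤ L) {m μ a b p N₀ γ : ℝ}
    (hm : 0 < m) (hμ : 0 < μ) (ha : 0 < a) (hb : 0 < b) (hp : 0 < p)
    (hN₀ : 0 < N₀) (hγ : 0 < γ)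
    (X Z : Ω → ℝ) (hX : Measurable X) (hZ : Measurable Z)
    (hXlaw : Measure.map X ℙ = gammaMeasure k m⁻¹)
    (hZlaw : Measure.map Z ℙ = gammaMeasure L μ⁻¹)
    (hindep : IndepFun X Z ℙ)
    (u v : ℝ) (hu : u = γ * p / (a * m)) (hv : v = (γ * N₀ + b) / (a * m)) :
    (ℙ {ω | max (a * X ω - b) 0 < γ * (p * Z ω + N₀)}).toReal
      = 1 - Real.exp (-v) * ∑ l ∈ range k, ∑ s ∈ range (l + 1),
          l.choose s * (s + L - 1).factorial * v ^ (l - s) * u ^ s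
            / (l.factorial * (L - 1).factorial * μ ^ L * (u + 1 / μ) ^ (s + L)) := by
  have hthreshold : ∀ᵐ z ∂(ℙ : Measure Ω).map Z, 0 < γ * (p * z + N₀) := by
    rw [hZlaw]
    filter_upwards [ae_nonneg_gammaMeasure _ _] with z hz
    positivity
  have harg : ∀ z, m⁻¹ * ((γ * (p * z + N₀) + b) / a) = u * z + v := fun z => by
    rw [hu, hv]; field_simp; ring
  rw [← measureReal_def, hindep.measureReal_max_sub_lt hX hZ hk (inv_pos.2 hm) hXlaw ha hb.le
    (by fun_prop) hthreshold, hZlaw]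
  simp_rw [harg]
  rw [integral_erlangSurvival_gammaMeasure k hL (inv_pos.2 hμ) (by rw [hu]; positivity)]
  congr 3 with l
  refine sum_congr rfl fun s _ => ?_
  rw [one_div, inv_pow]
  field_simp
end
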